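/- arXiv:1508.01846 — 4 statements merged into one kernel-verified Lean document; each statement's English description precedes it below -/
import Mathlib

section
/- Let F, H : ℝ^N → ℝ be twice continuously differentiable, k : ℝ → ℝ^N a differentiable curve and λ : ℝ → ℝ a differentiable function such that for all h in an open interval I: ∇F(k(h)) = λ(h) · ∇H(k(h)) and H(k(h)) = h. Let M(h) be the Hessian of F − λ(h)·H at k(h) and R(h) = ∇H(k(h)), and assume M(h) is invertible with ⟨R(h), M(h)⁻¹ R(h)⟩ ≠ 0. Then λ'(h) = 1 / ⟨R(h), M(h)⁻¹ R(h)⟩, and setting f(h) = F(k(h)), the second derivative satisfies f''(h) = λ'(h). -/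
/-- The Hessian matrix of `G : ℝ^N → ℝ` at `x`, with entries `∂²G/∂k_i∂k_j`. -/
noncomputable def hessianMatrix {N : ℕ} (G : EuclideanSpace ℝ (Fin N) → ℝ)
    (x : EuclideanSpace ℝ (Fin N)) : Matrix (Fin N) (Fin N) ℝ :=
  Matrix.of fun i j =>
    fderiv ℝ (fun y => fderiv ℝ G y (EuclideanSpace.single j 1)) x (EuclideanSpace.single i 1)

/-!
Write `x = k h`, `v = k'(h)`, `M = M(h)`, `R = R(h)`. Differentiating `H (k s) = s` gives
`⟨v, R⟩ = 1`; differentiating the Lagrange condition `∇F(k s) = λ(s) ∇H(k s)` at `s = h` gives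
`vᵀ M = λ'(h) Rᵀ`. Hence `v = λ'(h) Rᵀ M⁻¹` and `1 = ⟨v, R⟩ = λ'(h) ⟨R, M⁻¹ R⟩`. Moreover
`f'(s) = DF(k s) k'(s) = λ(s) DH(k s) k'(s) = λ(s)` on the interval, so `f'' = λ'`.
-/

open Filter Topology Matrix

theorem Matrix.mul_dotProduct_inv_mulVec_eq_one {n R : Type*} [Fintype n] [DecidableEq n]
    [CommRing R] {M : Matrix n n R} (hM : IsUnit M.det) {v r : n → R} {c : R}
    (hvM : v ᵥ* M = c • r) (hvr : v ⬝ᵥ r = 1) : c * (r ⬝ᵥ M⁻¹ *ᵥ r) = 1 := by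
  have hv : v = (c • r) ᵥ* M⁻¹ := by
    rw [← hvM, vecMul_vecMul, mul_nonsing_inv _ hM, vecMul_one]
  rw [← hvr, hv, dotProduct_mulVec, smul_vecMul, smul_dotProduct, smul_eq_mul]

theorem fderiv_eq_smul_of_gradient_eq_smul {E : Type*} [NormedAddCommGroup E]
    [InnerProductSpace ℝ E] [CompleteSpace E] {F H : E → ℝ} {x : E} {c : ℝ}
    (h : gradient F x = c • gradient H x) : fderiv ℝ F x = c • fderiv ℝ H x := by
  rw [← toDual_gradient, h, map_smul, toDual_gradient]

theorem fderiv_apply_deriv_eq_one_of_comp_eventuallyEq_id {E : Type*} [NormedAddCommGroup E]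
    [NormedSpace ℝ E] {H : E → ℝ} {k : ℝ → E} {h : ℝ}
    (hH : DifferentiableAt ℝ H (k h)) (hk : DifferentiableAt ℝ k h)
    (hHk : (fun s => H (k s)) =ᶠ[𝓝 h] id) : fderiv ℝ H (k h) (deriv k h) = 1 :=
  ((hH.hasFDerivAt.comp_hasDerivAt h hk.hasDerivAt).congr_of_eventuallyEq hHk.symm).unique
    (hasDerivAt_id h)

/-- Along `k`, `D(F - λ(h) H) = (λ s - λ h) • DH`, whose `D²H` term vanishes at `s = h`. -/
theorem fderiv_fderiv_sub_apply_deriv {E : Type*} [NormedAddCommGroup E] [NormedSpace ℝ E]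
    {F H : E → ℝ} (hF : ContDiff ℝ 2 F) (hH : ContDiff ℝ 2 H) {k : ℝ → E} {lam : ℝ → ℝ}
    {h : ℝ} (hk : DifferentiableAt ℝ k h) (hlam : DifferentiableAt ℝ lam h)
    (hLag : ∀ᶠ s in 𝓝 h, fderiv ℝ F (k s) = lam s • fderiv ℝ H (k s)) :
    fderiv ℝ (fderiv ℝ fun x => F x - lam h * H x) (k h) (deriv k h) =
      deriv lam h • fderiv ℝ H (k h) := by
  have hFd : Differentiable ℝ F := hF.differentiable two_ne_zero
  have hHd : Differentiable ℝ H := hH.differentiable two_ne_zero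
  have hDF : Differentiable ℝ (fderiv ℝ F) := (hF.fderiv_right le_rfl).differentiable one_ne_zero
  have hDH : Differentiable ℝ (fderiv ℝ H) := (hH.fderiv_right le_rfl).differentiable one_ne_zero
  have hDG : fderiv ℝ (fun x => F x - lam h * H x) = fderiv ℝ F - lam h • fderiv ℝ H := by
    ext1 y
    rw [fderiv_fun_sub (hFd y) ((hHd y).const_mul _), fderiv_const_mul (hHd y)]
    rfl
  have hcurve : HasDerivAt (fun s => fderiv ℝ (fun x => F x - lam h * H x) (k s))
      (fderiv ℝ (fderiv ℝ fun x => F x - lam h * H x) (k h) (deriv k h)) h :=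
    (hDG ▸ (hDF.sub (hDH.const_smul (lam h))) (k h)).hasFDerivAt.comp_hasDerivAt h hk.hasDerivAt
  have hprod := (hlam.hasDerivAt.sub_const (lam h)).smul
    ((hDH (k h)).hasFDerivAt.comp_hasDerivAt h hk.hasDerivAt)
  rw [sub_self, zero_smul, zero_add] at hprod
  refine (hcurve.congr_of_eventuallyEq ?_).unique hprod
  filter_upwards [hLag] with s hs
  simp [hDG, hs, sub_smul]

section EuclideanSpace

variable {N : ℕ}

theorem gradient_apply_eq_fderiv_single (f : EuclideanSpace ℝ (Fin N) → ℝ)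
    (x : EuclideanSpace ℝ (Fin N)) (j : Fin N) :
    gradient f x j = fderiv ℝ f x (EuclideanSpace.single j 1) := by
  rw [← inner_gradient_left, EuclideanSpace.inner_single_right]
  simp

theorem dotProduct_gradient (f : EuclideanSpace ℝ (Fin N) → ℝ) (x v : EuclideanSpace ℝ (Fin N)) :
    v.ofLp ⬝ᵥ (gradient f x).ofLp = fderiv ℝ f x v := by
  rw [← inner_gradient_left, EuclideanSpace.inner_eq_star_dotProduct, star_trivial]

theorem hessianMatrix_apply {G : EuclideanSpace ℝ (Fin N) → ℝ} {x : EuclideanSpace ℝ (Fin N)}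
    (hG : DifferentiableAt ℝ (fderiv ℝ G) x) (i j : Fin N) :
    hessianMatrix G x i j =
      fderiv ℝ (fderiv ℝ G) x (EuclideanSpace.single i 1) (EuclideanSpace.single j 1) := by
  simp [hessianMatrix, fderiv_clm_apply hG (differentiableAt_const _)]

theorem vecMul_hessianMatrix {G : EuclideanSpace ℝ (Fin N) → ℝ} {x : EuclideanSpace ℝ (Fin N)}
    (hG : DifferentiableAt ℝ (fderiv ℝ G) x) (v : EuclideanSpace ℝ (Fin N)) :
    v.ofLp ᵥ* hessianMatrix G x =
      fun j => fderiv ℝ (fderiv ℝ G) x v (EuclideanSpace.single j 1) := by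
  ext j
  conv_rhs => rw [← (EuclideanSpace.basisFun (Fin N) ℝ).sum_repr v]
  simp [vecMul, dotProduct, hessianMatrix_apply hG]

end EuclideanSpace

/-- Along an h-parametrized Lagrange solution curve
(`∇F(k h) = λ(h) • ∇H(k h)` and `H(k h) = h`), with `M(h)` the Hessian of
`F − λ(h)·H` at `k h` and `R(h) = ∇H(k h)`, if `M(h)` is invertible and
`⟨R(h), M(h)⁻¹ R(h)⟩ ≠ 0`, then `λ'(h) = 1 / ⟨R(h), M(h)⁻¹ R(h)⟩` and,
with `f(h) = F(k h)`, `f''(h) = λ'(h)`. -/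
theorem deriv_lambda_eq_inv_RMinvR {N : ℕ}
    (F H : EuclideanSpace ℝ (Fin N) → ℝ)
    (hF : ContDiff ℝ 2 F) (hH : ContDiff ℝ 2 H)
    (k : ℝ → EuclideanSpace ℝ (Fin N)) (hk : Differentiable ℝ k)
    (lam : ℝ → ℝ) (hlam : Differentiable ℝ lam)
    (a b : ℝ)
    (hLag : ∀ h ∈ Set.Ioo a b, gradient F (k h) = lam h • gradient H (k h))
    (hcon : ∀ h ∈ Set.Ioo a b, H (k h) = h) :
    ∀ h ∈ Set.Ioo a b,
      (hessianMatrix (fun x => F x - lam h * H x) (k h)).det ≠ 0 →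
      dotProduct ((gradient H (k h) : EuclideanSpace ℝ (Fin N)) : Fin N → ℝ)
          ((hessianMatrix (fun x => F x - lam h * H x) (k h))⁻¹.mulVec
            ((gradient H (k h) : EuclideanSpace ℝ (Fin N)) : Fin N → ℝ)) ≠ 0 →
      deriv lam h =
        1 / dotProduct ((gradient H (k h) : EuclideanSpace ℝ (Fin N)) : Fin N → ℝ)
          ((hessianMatrix (fun x => F x - lam h * H x) (k h))⁻¹.mulVec
            ((gradient H (k h) : EuclideanSpace ℝ (Fin N)) : Fin N → ℝ)) ∧
      deriv (deriv (fun s => F (k s))) h = deriv lam h := by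
  intro h hh hdet _
  have hI : Set.Ioo a b ∈ 𝓝 h := Ioo_mem_nhds hh.1 hh.2
  have hDLag : ∀ s ∈ Set.Ioo a b, fderiv ℝ F (k s) = lam s • fderiv ℝ H (k s) :=
    fun s hs => fderiv_eq_smul_of_gradient_eq_smul (hLag s hs)
  have hHk : ∀ s ∈ Set.Ioo a b, fderiv ℝ H (k s) (deriv k s) = 1 := fun s hs =>
    fderiv_apply_deriv_eq_one_of_comp_eventuallyEq_id (hH.differentiable two_ne_zero _) (hk s)
      (eventually_of_mem (Ioo_mem_nhds hs.1 hs.2) hcon)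
  have hM : (deriv k h).ofLp ᵥ* hessianMatrix (fun x => F x - lam h * H x) (k h) =
      deriv lam h • (gradient H (k h)).ofLp := by
    have hG : ContDiff ℝ 2 fun x => F x - lam h * H x := hF.sub (contDiff_const.mul hH)
    rw [vecMul_hessianMatrix ((hG.fderiv_right le_rfl).differentiable one_ne_zero _),
      fderiv_fderiv_sub_apply_deriv hF hH (hk h) (hlam h) (eventually_of_mem hI hDLag)]
    ext j
    simp [gradient_apply_eq_fderiv_single]
  have hR : (deriv k h).ofLp ⬝ᵥ (gradient H (k h)).ofLp = 1 :=
    (dotProduct_gradient H (k h) (deriv k h)).trans (hHk h hh)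
  refine ⟨eq_one_div_of_mul_eq_one_left
    (mul_dotProduct_inv_mulVec_eq_one (isUnit_iff_ne_zero.2 hdet) hM hR), ?_⟩
  have hf' : deriv (fun s => F (k s)) =ᶠ[𝓝 h] lam := by
    filter_upwards [hI] with s hs
    rw [← Function.comp_def, fderiv_comp_deriv s (hF.differentiable two_ne_zero _) (hk s),
      hDLag s hs, _root_.smul_apply, hHk s hs, smul_eq_mul, mul_one]
  exact hf'.deriv_eq
end

section
/- Let F, H : ℝ^N → ℝ be twice continuously differentiable, k : ℝ → ℝ^N a differentiable curve and μ : ℝ → ℝ a differentiable function such that for all f in an open interval I: ∇H(k(f)) = μ(f) · ∇F(k(f)) and F(k(f)) = f. Let N(f) be the Hessian of H − μ(f)·F at k(f) and S(f) = ∇F(k(f)), and assume N(f) is invertible with ⟨S(f), N(f)⁻¹ S(f)⟩ ≠ 0. Then μ'(f) = 1 / ⟨S(f), N(f)⁻¹ S(f)⟩, and setting h(f) = H(k(f)), the second derivative satisfies h''(f) = μ'(f). -/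
/-- View a vector of `ℝ^N` (Euclidean space) as a plain tuple `Fin N → ℝ`. -/
def toVec {N : ℕ} (v : EuclideanSpace ℝ (Fin N)) : Fin N → ℝ := v

open InnerProductSpace Filter Topology Matrix

section Gradient

variable {E : Type*} [NormedAddCommGroup E] [InnerProductSpace ℝ E] [CompleteSpace E]

theorem ContDiff.differentiable_gradient {G : E → ℝ} (hG : ContDiff ℝ 2 G) :
    Differentiable ℝ (gradient G) := by
  have hG' : Differentiable ℝ (fderiv ℝ G) :=
    (hG.fderiv_right (m := 1) (by norm_num)).differentiable (by norm_num)
  exact (toDual ℝ E).symm.toContinuousLinearEquiv.differentiable.comp hG'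

theorem gradient_sub_const_mul {H F : E → ℝ} {x : E} (hH : DifferentiableAt ℝ H x)
    (hF : DifferentiableAt ℝ F x) (c : ℝ) :
    gradient (fun y => H y - c * F y) x = gradient H x - c • gradient F x := by
  simp only [gradient, fderiv_fun_sub hH (hF.const_mul c), fderiv_const_mul hF, map_sub, map_smul]

theorem fderiv_gradient_sub_const_mul {H F : E → ℝ} {x : E} (hH : Differentiable ℝ H)
    (hF : Differentiable ℝ F) (hH' : DifferentiableAt ℝ (gradient H) x)
    (hF' : DifferentiableAt ℝ (gradient F) x) (c : ℝ) :
    fderiv ℝ (gradient fun y => H y - c * F y) x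
      = fderiv ℝ (gradient H) x - c • fderiv ℝ (gradient F) x := by
  have : (gradient fun y => H y - c * F y) = fun y => gradient H y - c • gradient F y :=
    funext fun y => gradient_sub_const_mul (hH y) (hF y) c
  rw [this]
  exact (hH'.hasFDerivAt.sub (hF'.hasFDerivAt.const_smul c)).fderiv

end Gradient

section Curve

variable {E : Type*} [NormedAddCommGroup E] [NormedSpace ℝ E]

theorem fderiv_apply_deriv_eq_one_of_eventually_comp_eq_id {F : E → ℝ} {k : ℝ → E} {s : ℝ}
    (hF : DifferentiableAt ℝ F (k s)) (hk : DifferentiableAt ℝ k s)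
    (hcon : ∀ᶠ t in 𝓝 s, F (k t) = t) : fderiv ℝ F (k s) (deriv k s) = 1 :=
  (hF.hasFDerivAt.comp_hasDerivAt s hk.hasDerivAt).unique
    ((hasDerivAt_id s).congr_of_eventuallyEq hcon)

end Curve

section Lagrange

variable {E : Type*} [NormedAddCommGroup E] [InnerProductSpace ℝ E] [CompleteSpace E]
  {F H : E → ℝ} {k : ℝ → E} {mu : ℝ → ℝ} {s : ℝ}

theorem deriv_comp_eq_mul_of_gradient_eq_smul (hH : DifferentiableAt ℝ H (k s))
    (hk : DifferentiableAt ℝ k s) (hLag : gradient H (k s) = mu s • gradient F (k s)) :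
    deriv (fun t => H (k t)) s = mu s * fderiv ℝ F (k s) (deriv k s) := by
  change deriv (H ∘ k) s = _
  rw [(hH.hasFDerivAt.comp_hasDerivAt s hk.hasDerivAt).deriv, ← inner_gradient_left, hLag,
    real_inner_smul_left, inner_gradient_left]

theorem fderiv_gradient_apply_deriv_of_eventually_gradient_eq_smul
    (hH : DifferentiableAt ℝ (gradient H) (k s)) (hF : DifferentiableAt ℝ (gradient F) (k s))
    (hk : DifferentiableAt ℝ k s) (hmu : DifferentiableAt ℝ mu s)
    (hLag : ∀ᶠ t in 𝓝 s, gradient H (k t) = mu t • gradient F (k t)) :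
    fderiv ℝ (gradient H) (k s) (deriv k s) - mu s • fderiv ℝ (gradient F) (k s) (deriv k s)
      = deriv mu s • gradient F (k s) := by
  have hderiv := (hH.hasFDerivAt.comp_hasDerivAt s hk.hasDerivAt).sub
    (hmu.hasDerivAt.smul (hF.hasFDerivAt.comp_hasDerivAt s hk.hasDerivAt))
  have hzero : HasDerivAt (fun t => gradient H (k t) - mu t • gradient F (k t)) 0 s :=
    (hasDerivAt_const s 0).congr_of_eventuallyEq (hLag.mono fun t ht => sub_eq_zero.mpr ht)
  rw [sub_eq_zero.mp (hderiv.unique hzero), add_sub_cancel_left]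
  rfl

end Lagrange

section Hessian

variable {N : ℕ}

theorem hessianMatrix_apply_eq_fderiv_gradient {G : EuclideanSpace ℝ (Fin N) → ℝ}
    {x : EuclideanSpace ℝ (Fin N)} (hG : DifferentiableAt ℝ (gradient G) x) (i j : Fin N) :
    hessianMatrix G x i j = fderiv ℝ (gradient G) x (EuclideanSpace.single i 1) j := by
  have hcoord : (fun y => fderiv ℝ G y (EuclideanSpace.single j 1))
      = (EuclideanSpace.proj j : EuclideanSpace ℝ (Fin N) →L[ℝ] ℝ) ∘ gradient G := by
    funext y
    simp [← inner_gradient_left, EuclideanSpace.inner_single_right]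
  rw [hessianMatrix, of_apply, hcoord,
    ((EuclideanSpace.proj j).hasFDerivAt.comp x hG.hasFDerivAt).fderiv]
  rfl

/-- With the row convention of `hessianMatrix`, the Hessian acts by `vecMul`; no symmetry of second
derivatives is needed. -/
theorem toVec_fderiv_gradient_apply {G : EuclideanSpace ℝ (Fin N) → ℝ}
    {x : EuclideanSpace ℝ (Fin N)} (hG : DifferentiableAt ℝ (gradient G) x)
    (v : EuclideanSpace ℝ (Fin N)) :
    toVec (fderiv ℝ (gradient G) x v) = vecMul (toVec v) (hessianMatrix G x) := by
  funext j
  conv_lhs => rw [← (EuclideanSpace.basisFun (Fin N) ℝ).sum_repr v]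
  simp [vecMul, dotProduct, hessianMatrix_apply_eq_fderiv_gradient hG, toVec]

theorem dotProduct_toVec_gradient (G : EuclideanSpace ℝ (Fin N) → ℝ)
    (x v : EuclideanSpace ℝ (Fin N)) :
    toVec v ⬝ᵥ toVec (gradient G x) = fderiv ℝ G x v := by
  rw [← inner_gradient_left, EuclideanSpace.inner_eq_star_dotProduct, star_trivial]
  rfl

end Hessian

theorem Matrix.vecMul_dotProduct_nonsing_inv_mulVec {n R : Type*} [Fintype n] [DecidableEq n]
    [CommRing R] {M : Matrix n n R} (hM : IsUnit M.det) (v w : n → R) :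
    vecMul v M ⬝ᵥ (M⁻¹ *ᵥ w) = v ⬝ᵥ w := by
  rw [← dotProduct_mulVec, mulVec_mulVec, mul_nonsing_inv M hM, one_mulVec]

/-- Along an f-parametrized conjugate Lagrange solution curve
(`∇H(k f) = μ(f) • ∇F(k f)` and `F(k f) = f`), with `N(f)` the Hessian of
`H − μ(f)·F` at `k f` and `S(f) = ∇F(k f)`, if `N(f)` is invertible and
`⟨S(f), N(f)⁻¹ S(f)⟩ ≠ 0`, then `μ'(f) = 1 / ⟨S(f), N(f)⁻¹ S(f)⟩` and,
with `h(f) = H(k f)`, `h''(f) = μ'(f)`. -/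
theorem deriv_mu_eq_inv_SNinvS {N : ℕ}
    (F H : EuclideanSpace ℝ (Fin N) → ℝ)
    (hF : ContDiff ℝ 2 F) (hH : ContDiff ℝ 2 H)
    (k : ℝ → EuclideanSpace ℝ (Fin N)) (hk : Differentiable ℝ k)
    (mu : ℝ → ℝ) (hmu : Differentiable ℝ mu)
    (a b : ℝ)
    (hLag : ∀ f ∈ Set.Ioo a b, gradient H (k f) = mu f • gradient F (k f))
    (hcon : ∀ f ∈ Set.Ioo a b, F (k f) = f) :
    ∀ f ∈ Set.Ioo a b,
      (hessianMatrix (fun x => H x - mu f * F x) (k f)).det ≠ 0 →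
      dotProduct (toVec (gradient F (k f)))
          ((hessianMatrix (fun x => H x - mu f * F x) (k f))⁻¹.mulVec
            (toVec (gradient F (k f)))) ≠ 0 →
      deriv mu f =
        1 / dotProduct (toVec (gradient F (k f)))
          ((hessianMatrix (fun x => H x - mu f * F x) (k f))⁻¹.mulVec
            (toVec (gradient F (k f)))) ∧
      deriv (deriv (fun s => H (k s))) f = deriv mu f := by
  intro f hf hdet _
  have hFd : Differentiable ℝ F := hF.differentiable (by norm_num)
  have hHd : Differentiable ℝ H := hH.differentiable (by norm_num)
  have hIoo : ∀ s ∈ Set.Ioo a b, Set.Ioo a b ∈ 𝓝 s := fun s hs => isOpen_Ioo.mem_nhds hs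
  have hconDeriv : ∀ s ∈ Set.Ioo a b, fderiv ℝ F (k s) (deriv k s) = 1 := fun s hs =>
    fderiv_apply_deriv_eq_one_of_eventually_comp_eq_id (hFd _) (hk s)
      (eventually_of_mem (hIoo s hs) hcon)
  set S := toVec (gradient F (k f))
  have hkS : toVec (deriv k f) ⬝ᵥ S = 1 := by
    rw [dotProduct_toVec_gradient, hconDeriv f hf]
  have hHess : vecMul (toVec (deriv k f)) (hessianMatrix (fun x => H x - mu f * F x) (k f))
      = deriv mu f • S := by
    rw [← toVec_fderiv_gradient_apply
        ((hH.sub (contDiff_const.mul hF)).differentiable_gradient _),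
      fderiv_gradient_sub_const_mul hHd hFd (hH.differentiable_gradient _)
        (hF.differentiable_gradient _),
      _root_.sub_apply, _root_.smul_apply,
      fderiv_gradient_apply_deriv_of_eventually_gradient_eq_smul (hH.differentiable_gradient _)
        (hF.differentiable_gradient _) (hk f) (hmu f) (eventually_of_mem (hIoo f hf) hLag)]
    rfl
  refine ⟨eq_one_div_of_mul_eq_one_left ?_, ?_⟩
  · rw [← smul_eq_mul, ← smul_dotProduct, ← hHess,
      vecMul_dotProduct_nonsing_inv_mulVec hdet.isUnit, hkS]
  · refine EventuallyEq.deriv_eq (eventually_of_mem (hIoo f hf) fun s hs => ?_)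
    rw [deriv_comp_eq_mul_of_gradient_eq_smul (hHd _) (hk s) (hLag s hs), hconDeriv s hs, mul_one]
end

section
/- Let F, H : ℝ^N → ℝ be twice continuously differentiable, and let k : ℝ → ℝ^N be a differentiable arclength-parametrized curve (‖k'(s)‖ = 1) together with a function λ : ℝ → ℝ, such that along the curve ∇F(k(s)) = λ(s)·∇H(k(s)). Let M(s) be the Hessian of F − λ(s)·H at k(s), R(s) = ∇H(k(s)), P(s) = adj(M(s))·R(s), and suppose P(s) ≠ 0 and k'(s) = P(s)/‖P(s)‖. Then, setting f(s) = F(k(s)) and h(s) = H(k(s)): h'(s) = ⟨R(s), P(s)⟩ / ‖P(s)‖ and f'(s) = λ(s) · ⟨R(s), P(s)⟩ / ‖P(s)‖. If moreover λ is differentiable and the differentiated Lagrange identity M(s)·k'(s) = λ'(s)·R(s) holds with R(s) ≠ 0, then λ'(s) = det(M(s)) / ‖P(s)‖. -/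
/-- View a plain tuple `Fin N → ℝ` as a vector of Euclidean space `ℝ^N`
(so that `‖·‖` is the Euclidean norm). -/
def ofVec {N : ℕ} (v : Fin N → ℝ) : EuclideanSpace ℝ (Fin N) := WithLp.toLp 2 v

/-! By the chain rule `h' = ⟨R, k'⟩`, and `f' = ⟨∇F, k'⟩ = λ h'` by the Lagrange identity.
Applying `adj M` to `M k' = λ' R` and using `adj M · M = det M · I` turns it into
`(det M / ‖P‖) • P = λ' • P`, so `λ' = det M / ‖P‖` because `P ≠ 0`. -/

open scoped InnerProductSpace Matrix

theorem deriv_comp_eq_inner_gradient {E : Type*} [NormedAddCommGroup E] [InnerProductSpace ℝ E]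
    [CompleteSpace E] {f : E → ℝ} {k : ℝ → E} {s : ℝ} (hf : DifferentiableAt ℝ f (k s))
    (hk : DifferentiableAt ℝ k s) :
    deriv (fun u => f (k u)) s = ⟪gradient f (k s), deriv k s⟫_ℝ := by
  rw [inner_gradient_left]
  exact (hf.hasFDerivAt.comp_hasDerivAt s hk.hasDerivAt).deriv

theorem inner_inv_norm_smul_ofVec {N : ℕ} (v : EuclideanSpace ℝ (Fin N)) (p : Fin N → ℝ) :
    ⟪v, ‖ofVec p‖⁻¹ • ofVec p⟫_ℝ = toVec v ⬝ᵥ p / ‖ofVec p‖ := by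
  rw [real_inner_smul_right, div_eq_inv_mul]
  simp [PiLp.inner_apply, dotProduct, ofVec, toVec, mul_comm]

theorem Matrix.eq_det_mul_of_mulVec_smul_adjugate_mulVec {n R : Type*} [Fintype n] [DecidableEq n]
    [CommRing R] [IsDomain R] {M : Matrix n n R} {r : n → R} {c μ : R}
    (hP : M.adjugate *ᵥ r ≠ 0) (h : M *ᵥ (c • (M.adjugate *ᵥ r)) = μ • r) :
    μ = M.det * c := by
  have key : (M.det * c) • (M.adjugate *ᵥ r) = μ • (M.adjugate *ᵥ r) := calc
    (M.det * c) • (M.adjugate *ᵥ r) = (M.adjugate * M) *ᵥ (c • (M.adjugate *ᵥ r)) := by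
      rw [Matrix.adjugate_mul, Matrix.smul_mulVec, Matrix.one_mulVec, smul_smul]
    _ = μ • (M.adjugate *ᵥ r) := by
      rw [← Matrix.mulVec_mulVec, h, Matrix.mulVec_smul]
  exact smul_left_injective R hP key |>.symm

theorem arclength_formulation_general {N : ℕ}
    (F H : EuclideanSpace ℝ (Fin N) → ℝ)
    (hF : ContDiff ℝ 2 F) (hH : ContDiff ℝ 2 H)
    (k : ℝ → EuclideanSpace ℝ (Fin N)) (hk : Differentiable ℝ k)
    (lam : ℝ → ℝ)
    (hLag : ∀ s : ℝ, gradient F (k s) = lam s • gradient H (k s)) :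
    ∀ s : ℝ,
      ofVec ((hessianMatrix (fun x => F x - lam s * H x) (k s)).adjugate.mulVec
          (toVec (gradient H (k s)))) ≠ 0 →
      deriv k s =
        ‖ofVec ((hessianMatrix (fun x => F x - lam s * H x) (k s)).adjugate.mulVec
            (toVec (gradient H (k s))))‖⁻¹ •
          ofVec ((hessianMatrix (fun x => F x - lam s * H x) (k s)).adjugate.mulVec
            (toVec (gradient H (k s)))) →
      (deriv (fun u => H (k u)) s =
          dotProduct (toVec (gradient H (k s)))
              ((hessianMatrix (fun x => F x - lam s * H x) (k s)).adjugate.mulVec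
                (toVec (gradient H (k s)))) /
            ‖ofVec ((hessianMatrix (fun x => F x - lam s * H x) (k s)).adjugate.mulVec
              (toVec (gradient H (k s))))‖ ∧
        deriv (fun u => F (k u)) s =
          lam s *
            (dotProduct (toVec (gradient H (k s)))
                ((hessianMatrix (fun x => F x - lam s * H x) (k s)).adjugate.mulVec
                  (toVec (gradient H (k s)))) /
              ‖ofVec ((hessianMatrix (fun x => F x - lam s * H x) (k s)).adjugate.mulVec
                (toVec (gradient H (k s))))‖) ∧
        (Differentiable ℝ lam →
          (hessianMatrix (fun x => F x - lam s * H x) (k s)).mulVec (toVec (deriv k s)) =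
            deriv lam s • toVec (gradient H (k s)) →
          gradient H (k s) ≠ 0 →
          deriv lam s =
            (hessianMatrix (fun x => F x - lam s * H x) (k s)).det /
              ‖ofVec ((hessianMatrix (fun x => F x - lam s * H x) (k s)).adjugate.mulVec
                (toVec (gradient H (k s))))‖)) := by
  intro s hP htangent
  set M := hessianMatrix (fun x => F x - lam s * H x) (k s)
  set R := gradient H (k s)
  set P := M.adjugate *ᵥ toVec R
  have hdiff {G : EuclideanSpace ℝ (Fin N) → ℝ} (hG : ContDiff ℝ 2 G) :
      DifferentiableAt ℝ G (k s) :=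
    (hG.differentiable (by norm_num)).differentiableAt
  have hRk : ⟪R, deriv k s⟫_ℝ = toVec R ⬝ᵥ P / ‖ofVec P‖ := by
    rw [htangent, inner_inv_norm_smul_ofVec]
  refine ⟨?_, ?_, fun _ hMk _ => ?_⟩
  · rw [deriv_comp_eq_inner_gradient (hdiff hH) (hk s), hRk]
  · rw [deriv_comp_eq_inner_gradient (hdiff hF) (hk s), hLag s, real_inner_smul_left, hRk]
  · have hPne : P ≠ 0 := fun h => hP (by rw [h]; rfl)
    rw [show toVec (deriv k s) = ‖ofVec P‖⁻¹ • P by rw [htangent]; rfl] at hMk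
    rw [Matrix.eq_det_mul_of_mulVec_smul_adjugate_mulVec hPne hMk, div_eq_mul_inv]

/-- Arclength (singularity-free) formulation of the Lagrange
solution path.  If the curve `k` is arclength-parametrized (`‖k'(s)‖ = 1`),
satisfies `∇F(k s) = λ(s) • ∇H(k s)`, and its unit tangent is
`k'(s) = P(s)/‖P(s)‖` with `P(s) = adj(M(s))·R(s) ≠ 0` (where `M(s)` is the
Hessian of `F − λ(s)H` at `k s` and `R(s) = ∇H(k s)`), then
`h'(s) = ⟨R,P⟩/‖P‖` and `f'(s) = λ(s)·⟨R,P⟩/‖P‖`; moreover, if `λ` is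
differentiable and the differentiated Lagrange identity `M·k' = λ'·R` holds
with `R ≠ 0`, then `λ'(s) = det(M)/‖P‖`. -/
theorem arclength_formulation {N : ℕ}
    (F H : EuclideanSpace ℝ (Fin N) → ℝ)
    (hF : ContDiff ℝ 2 F) (hH : ContDiff ℝ 2 H)
    (k : ℝ → EuclideanSpace ℝ (Fin N)) (hk : Differentiable ℝ k)
    (lam : ℝ → ℝ)
    (hunit : ∀ s : ℝ, ‖deriv k s‖ = 1)
    (hLag : ∀ s : ℝ, gradient F (k s) = lam s • gradient H (k s)) :
    ∀ s : ℝ,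
      ofVec ((hessianMatrix (fun x => F x - lam s * H x) (k s)).adjugate.mulVec
          (toVec (gradient H (k s)))) ≠ 0 →
      deriv k s =
        ‖ofVec ((hessianMatrix (fun x => F x - lam s * H x) (k s)).adjugate.mulVec
            (toVec (gradient H (k s))))‖⁻¹ •
          ofVec ((hessianMatrix (fun x => F x - lam s * H x) (k s)).adjugate.mulVec
            (toVec (gradient H (k s)))) →
      (deriv (fun u => H (k u)) s =
          dotProduct (toVec (gradient H (k s)))
              ((hessianMatrix (fun x => F x - lam s * H x) (k s)).adjugate.mulVec
                (toVec (gradient H (k s)))) /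
            ‖ofVec ((hessianMatrix (fun x => F x - lam s * H x) (k s)).adjugate.mulVec
              (toVec (gradient H (k s))))‖ ∧
        deriv (fun u => F (k u)) s =
          lam s *
            (dotProduct (toVec (gradient H (k s)))
                ((hessianMatrix (fun x => F x - lam s * H x) (k s)).adjugate.mulVec
                  (toVec (gradient H (k s)))) /
              ‖ofVec ((hessianMatrix (fun x => F x - lam s * H x) (k s)).adjugate.mulVec
                (toVec (gradient H (k s))))‖) ∧
        (Differentiable ℝ lam →
          (hessianMatrix (fun x => F x - lam s * H x) (k s)).mulVec (toVec (deriv k s)) =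
            deriv lam s • toVec (gradient H (k s)) →
          gradient H (k s) ≠ 0 →
          deriv lam s =
            (hessianMatrix (fun x => F x - lam s * H x) (k s)).det /
              ‖ofVec ((hessianMatrix (fun x => F x - lam s * H x) (k s)).adjugate.mulVec
                (toVec (gradient H (k s))))‖)) :=
  arclength_formulation_general F H hF hH k hk lam hLag
end

section
/- Let d ∈ ℝ^N and define H(k) = ‖k − d‖² = Σ_{m=1}^N (k_m − d_m)². Then the Hessian of H at every point equals 2·I (twice the identity matrix), and d is the unique point with ∇H = 0 (the constraint-independent optimum of H). Moreover, if F : ℝ^N → ℝ is C² and k : ℝ → ℝ^N is a differentiable curve with k(0) = d satisfying the conjugate Lagrange condition ∇H(k(μ)) = μ·∇F(k(μ)) for all μ in a neighborhood of 0, then the initial tangent is k'(0) = (1/2)·∇F(d). -/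
/-- The quadratic constraint `H(k) = ‖k − d‖² = Σ (k_m − d_m)²` measuring the
deviation of the variables from a design point `d`. -/
noncomputable def sqDeviation {N : ℕ} (d : EuclideanSpace ℝ (Fin N))
    (k : EuclideanSpace ℝ (Fin N)) : ℝ :=
  ∑ m : Fin N, (k m - d m) ^ 2

open Filter Topology InnerProductSpace
open scoped RealInnerProductSpace

theorem hasDerivAt_of_eventually_smul_sub_eq_smul {E : Type*} [NormedAddCommGroup E]
    [NormedSpace ℝ E] {k g : ℝ → E} {a c : ℝ} (hc : c ≠ 0) (hg : ContinuousAt g a)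
    (h : ∀ᶠ μ in 𝓝 a, c • (k μ - k a) = (μ - a) • g μ) :
    HasDerivAt k (c⁻¹ • g a) a := by
  rw [hasDerivAt_iff_tendsto_slope]
  refine ((hg.const_smul c⁻¹).mono_left nhdsWithin_le_nhds).congr' ?_
  filter_upwards [nhdsWithin_le_nhds h, self_mem_nhdsWithin] with μ hμ hne
  have hne : μ - a ≠ 0 := sub_ne_zero.mpr hne
  rw [slope_def_module, ← inv_smul_smul₀ hc (k μ - k a), hμ, smul_comm, inv_smul_smul₀ hne,
    Pi.smul_apply]

section
variable {E : Type*} [NormedAddCommGroup E] [InnerProductSpace ℝ E]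

theorem hasFDerivAt_norm_sub_sq (d x : E) :
    HasFDerivAt (fun k => ‖k - d‖ ^ 2) (2 • innerSL ℝ (x - d)) x := by
  simpa using ((hasFDerivAt_id x).sub_const d).norm_sq

theorem fderiv_norm_sub_sq_apply (d y v : E) :
    fderiv ℝ (fun k => ‖k - d‖ ^ 2) y v = 2 * ⟪y - d, v⟫ := by
  simp [(hasFDerivAt_norm_sub_sq d y).fderiv, inner_sub_left]

theorem fderiv_fderiv_norm_sub_sq_apply (d v x w : E) :
    fderiv ℝ (fun y => fderiv ℝ (fun k => ‖k - d‖ ^ 2) y v) x w = 2 * ⟪w, v⟫ := by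
  have hlin : (fun y => fderiv ℝ (fun k => ‖k - d‖ ^ 2) y v) =
      fun y => (2 • innerSL ℝ v) (y - d) := by
    funext y
    simp [fderiv_norm_sub_sq_apply, real_inner_comm]
  rw [hlin, fderiv_comp_sub, ContinuousLinearMap.fderiv]
  simp [real_inner_comm]

theorem ContDiff.continuous_gradient [CompleteSpace E] {f : E → ℝ} {n : WithTop ℕ∞}
    (hf : ContDiff ℝ n f) (hn : n ≠ 0) : Continuous (gradient f) :=
  (toDual ℝ E).symm.continuous.comp (hf.continuous_fderiv hn)

theorem hasGradientAt_norm_sub_sq [CompleteSpace E] (d x : E) :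
    HasGradientAt (fun k => ‖k - d‖ ^ 2) ((2 : ℝ) • (x - d)) x := by
  rw [hasGradientAt_iff_hasFDerivAt]
  refine (hasFDerivAt_norm_sub_sq d x).congr_fderiv ?_
  ext v
  simp
end

theorem sqDeviation_eq_norm_sub_sq {N : ℕ} (d : EuclideanSpace ℝ (Fin N)) :
    sqDeviation d = fun k => ‖k - d‖ ^ 2 := by
  ext k
  simp [sqDeviation, EuclideanSpace.real_norm_sq_eq]

theorem gradient_sqDeviation {N : ℕ} (d x : EuclideanSpace ℝ (Fin N)) :
    gradient (sqDeviation d) x = (2 : ℝ) • (x - d) := by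
  rw [sqDeviation_eq_norm_sub_sq]
  exact (hasGradientAt_norm_sub_sq d x).gradient

theorem hessianMatrix_sqDeviation {N : ℕ} (d x : EuclideanSpace ℝ (Fin N)) :
    hessianMatrix (sqDeviation d) x = (2 : ℝ) • (1 : Matrix (Fin N) (Fin N) ℝ) := by
  ext i j
  simp [hessianMatrix, sqDeviation_eq_norm_sub_sq, fderiv_fderiv_norm_sub_sq_apply,
    EuclideanSpace.inner_single_left, Matrix.one_apply]

/-- For `H(k) = Σ (k_m − d_m)²`: the Hessian of `H` is `2·I`
everywhere, `d` is the unique point with `∇H = 0` (the CIO of `H`), and for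
any C² objective `F` and differentiable curve `k` with `k 0 = d` satisfying
the conjugate Lagrange condition `∇H(k μ) = μ·∇F(k μ)` near `μ = 0`, the
initial tangent is `k'(0) = (1/2)·∇F(d)`. -/
theorem quadratic_constraint_initial_condition {N : ℕ}
    (d : EuclideanSpace ℝ (Fin N)) :
    (∀ x : EuclideanSpace ℝ (Fin N),
      hessianMatrix (sqDeviation d) x = (2 : ℝ) • (1 : Matrix (Fin N) (Fin N) ℝ)) ∧
    (∀ x : EuclideanSpace ℝ (Fin N), gradient (sqDeviation d) x = 0 ↔ x = d) ∧
    (∀ F : EuclideanSpace ℝ (Fin N) → ℝ, ContDiff ℝ 2 F →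
      ∀ k : ℝ → EuclideanSpace ℝ (Fin N), Differentiable ℝ k → k 0 = d →
        (∀ᶠ μ in nhds (0 : ℝ),
          gradient (sqDeviation d) (k μ) = μ • gradient F (k μ)) →
        deriv k 0 = (1 / 2 : ℝ) • gradient F d) := by
  refine ⟨hessianMatrix_sqDeviation d, fun x => ?_, fun F hF k hk hk0 hlagrange => ?_⟩
  · simp [gradient_sqDeviation, sub_eq_zero]
  · have hlagrange' : ∀ᶠ μ in 𝓝 0, (2 : ℝ) • (k μ - k 0) = (μ - 0) • gradient F (k μ) := by
      simpa [gradient_sqDeviation, hk0] using hlagrange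
    have := hasDerivAt_of_eventually_smul_sub_eq_smul two_ne_zero
      ((hF.continuous_gradient two_ne_zero).continuousAt.comp hk.continuous.continuousAt) hlagrange'
    rw [this.deriv, one_div, Function.comp_apply, hk0]
end
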